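/- Geometric convergence recursion for ITAT: Suppose A satisfies the 3s-RIP with δ_{3s} < (√5 − 1)/2, the stepsize v satisfies (3−√5)/(2(1−δ_{3s})) < v < (√5+1)/(2(1−δ_{3s})), and b = A x̄ + ε with x̄ s-sparse. Then the ITAT iterates x^{k+1} := H_s(T_{vλ}(x^k − v Aᵀ(Ax^k − b))) satisfy ‖x^{k+1} − x̄‖_2 ≤ ρ‖x^k − x̄‖_2 + ((√5+1)/2)·v·(√(1+δ_{2s})‖ε‖_2 + √(2s)·λ), where ρ := ((√5+1)/2)(|1 − v| + v δ_{3s}) ∈ (0,1). -/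

import Mathlib

open Finset Matrix

noncomputable def l1 {k : ℕ} (x : Fin k → ℝ) : ℝ := ∑ i, |x i|

noncomputable def l2 {k : ℕ} (x : Fin k → ℝ) : ℝ := Real.sqrt (∑ i, (x i)^2)

def restr {k : ℕ} (I : Finset (Fin k)) (x : Fin k → ℝ) : Fin k → ℝ :=
  fun i => if i ∈ I then x i else 0


noncomputable def softT {k : ℕ} (lam : ℝ) (x : Fin k → ℝ) : Fin k → ℝ :=
  fun i => max (|x i| - lam) 0 * Real.sign (x i)

noncomputable def enlarge {k : ℕ} (lam : ℝ) (x : Fin k → ℝ) : Fin k → ℝ :=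
  fun i => (1 + lam / l2 x) * x i

noncomputable def thrT {k : ℕ} (lam : ℝ) (x : Fin k → ℝ) : Fin k → ℝ :=
  enlarge lam (softT lam x)


def RIP {m n : ℕ} (A : Matrix (Fin m) (Fin n) ℝ) (s : ℕ) (δ : ℝ) : Prop :=
  ∀ (x : Fin n → ℝ) (J : Finset (Fin n)), J.card ≤ s →
    (1 - δ) * (l2 (restr J x))^2 ≤ (l2 (A.mulVec (restr J x)))^2 ∧
    (l2 (A.mulVec (restr J x)))^2 ≤ (1 + δ) * (l2 (restr J x))^2

/-!
Let `u` be the gradient step, `d = xᵏ - x̄` and `T = K ∪ S̄`. Everything in sight is supported on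
`T ∪ Sₖ`, of size at most `3s`, and on `T`

  `u - x̄ = (1 - v) d + v (d - AᵀA d) + v Aᵀ ε`.

Polarising the RIP bounds `‖(d - AᵀA d)_T‖` by `δ₃ₛ ‖d‖` and `‖(Aᵀ ε)_T‖` by `√(1 + δ₂ₛ) ‖ε‖`,
while the ℓ₁₋₂ thresholding moves every entry by at most `vλ`, hence `(z - u)_T` by `√(2s) vλ`.

Hard thresholding then costs a factor `φ = (1 + √5)/2`: with `w = z - x̄`, the error is
`‖w_K‖² + ‖x̄_{S̄∖K}‖²`, and `‖x̄_{S̄∖K}‖ ≤ ‖w_{S̄∖K}‖ + ‖z_{S̄∖K}‖` where `‖z_{S̄∖K}‖ ≤ ‖w_K‖`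
because `K` holds the largest entries of `z`. The inequality `A + (a + c)² ≤ φ² (A + c²)` for
`a² ≤ A` closes the argument.
-/

section l2

variable {k : ℕ}

lemma l2_eq_norm (x : Fin k → ℝ) : l2 x = ‖WithLp.toLp 2 x‖ := by
  simp [l2, EuclideanSpace.norm_eq]

lemma l2_nonneg (x : Fin k → ℝ) : 0 ≤ l2 x := Real.sqrt_nonneg _

lemma l2_sq (x : Fin k → ℝ) : l2 x ^ 2 = ∑ i, x i ^ 2 :=
  Real.sq_sqrt (sum_nonneg fun _ _ => sq_nonneg _)

lemma l2_sq_eq_dotProduct (x : Fin k → ℝ) : l2 x ^ 2 = x ⬝ᵥ x := by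
  simp only [l2_sq, dotProduct, ← sq]

lemma l2_le_of_sq_le {x : Fin k → ℝ} {c : ℝ} (hc : 0 ≤ c) (h : l2 x ^ 2 ≤ c ^ 2) : l2 x ≤ c :=
  (pow_le_pow_iff_left₀ (l2_nonneg x) hc two_ne_zero).1 h

lemma l2_eq_zero {x : Fin k → ℝ} : l2 x = 0 ↔ x = 0 := by
  rw [l2_eq_norm, norm_eq_zero, WithLp.toLp_eq_zero]

@[simp]
lemma l2_zero : l2 (0 : Fin k → ℝ) = 0 := l2_eq_zero.2 rfl

lemma l2_add_le (x y : Fin k → ℝ) : l2 (x + y) ≤ l2 x + l2 y := by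
  simpa only [l2_eq_norm, WithLp.toLp_add] using norm_add_le _ _

lemma l2_smul (c : ℝ) (x : Fin k → ℝ) : l2 (c • x) = |c| * l2 x := by
  rw [l2_eq_norm, l2_eq_norm, WithLp.toLp_smul, norm_smul, Real.norm_eq_abs]

lemma l2_neg (x : Fin k → ℝ) : l2 (-x) = l2 x := by
  rw [l2_eq_norm, l2_eq_norm, WithLp.toLp_neg, norm_neg]

lemma l2_sub_le (x y : Fin k → ℝ) : l2 (x - y) ≤ l2 x + l2 y := by
  simpa only [sub_eq_add_neg, l2_neg] using l2_add_le x (-y)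

lemma abs_le_l2 (x : Fin k → ℝ) (i : Fin k) : |x i| ≤ l2 x := by
  simpa [l2_eq_norm] using PiLp.norm_apply_le (WithLp.toLp 2 x) i

lemma dotProduct_le_l2_mul_l2 (x y : Fin k → ℝ) : x ⬝ᵥ y ≤ l2 x * l2 y := by
  simpa [l2_eq_norm, EuclideanSpace.inner_toLp_toLp, dotProduct_comm]
    using real_inner_le_norm (WithLp.toLp 2 x) (WithLp.toLp 2 y)

lemma l2_add_sq (x y : Fin k → ℝ) : l2 (x + y) ^ 2 = l2 x ^ 2 + 2 * (x ⬝ᵥ y) + l2 y ^ 2 := by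
  simp only [l2_sq_eq_dotProduct, add_dotProduct, dotProduct_add, dotProduct_comm y x]
  ring

lemma l2_sub_sq (x y : Fin k → ℝ) : l2 (x - y) ^ 2 = l2 x ^ 2 - 2 * (x ⬝ᵥ y) + l2 y ^ 2 := by
  simp only [l2_sq_eq_dotProduct, sub_dotProduct, dotProduct_sub, dotProduct_comm y x]
  ring

lemma l2_sq_eq_add_of_forall_sq_eq {x y z : Fin k → ℝ} (h : ∀ i, x i ^ 2 = y i ^ 2 + z i ^ 2) :
    l2 x ^ 2 = l2 y ^ 2 + l2 z ^ 2 := by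
  simp only [l2_sq, h, sum_add_distrib]

end l2

section restr

variable {k : ℕ}

@[simp]
lemma restr_zero (T : Finset (Fin k)) : restr T 0 = 0 := by
  ext i; simp [restr]

lemma restr_add (T : Finset (Fin k)) (x y : Fin k → ℝ) :
    restr T (x + y) = restr T x + restr T y := by
  ext i; by_cases hi : i ∈ T <;> simp [restr, hi]

lemma restr_sub (T : Finset (Fin k)) (x y : Fin k → ℝ) :
    restr T (x - y) = restr T x - restr T y := by
  ext i; by_cases hi : i ∈ T <;> simp [restr, hi]

lemma restr_smul (T : Finset (Fin k)) (c : ℝ) (x : Fin k → ℝ) :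
    restr T (c • x) = c • restr T x := by
  ext i; by_cases hi : i ∈ T <;> simp [restr, hi]

lemma restr_eq_self {T : Finset (Fin k)} {x : Fin k → ℝ} (hx : ∀ i ∉ T, x i = 0) :
    restr T x = x := by
  ext i; by_cases hi : i ∈ T <;> simp [restr, hi, hx]

lemma restr_apply_of_notMem {T : Finset (Fin k)} {i : Fin k} (hi : i ∉ T) (x : Fin k → ℝ) :
    restr T x i = 0 := if_neg hi

lemma l2_restr_sq (T : Finset (Fin k)) (x : Fin k → ℝ) :
    l2 (restr T x) ^ 2 = ∑ i ∈ T, x i ^ 2 := by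
  simp [l2_sq, restr, apply_ite (· ^ 2), sum_ite_mem]

lemma l2_restr_le (T : Finset (Fin k)) (x : Fin k → ℝ) : l2 (restr T x) ≤ l2 x := by
  refine l2_le_of_sq_le (l2_nonneg x) ?_
  rw [l2_restr_sq, l2_sq]
  exact sum_le_sum_of_subset_of_nonneg (subset_univ T) fun i _ _ => sq_nonneg _

lemma dotProduct_restr_self (T : Finset (Fin k)) (x : Fin k → ℝ) :
    x ⬝ᵥ restr T x = l2 (restr T x) ^ 2 := by
  rw [l2_sq_eq_dotProduct]
  refine sum_congr rfl fun i _ => ?_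
  by_cases hi : i ∈ T <;> simp [restr, hi]

lemma l2_restr_le_of_dotProduct_le {T : Finset (Fin k)} {x : Fin k → ℝ} {c : ℝ} (hc : 0 ≤ c)
    (h : x ⬝ᵥ restr T x ≤ c * l2 (restr T x)) : l2 (restr T x) ≤ c := by
  rw [dotProduct_restr_self] at h
  nlinarith [l2_nonneg (restr T x)]

lemma l2_restr_le_of_abs_le {T : Finset (Fin k)} {x : Fin k → ℝ} {c : ℝ} (hc : 0 ≤ c)
    (h : ∀ i ∈ T, |x i| ≤ c) : l2 (restr T x) ≤ Real.sqrt T.card * c := by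
  refine l2_le_of_sq_le (by positivity) ?_
  rw [l2_restr_sq, mul_pow, Real.sq_sqrt (Nat.cast_nonneg _), ← nsmul_eq_mul]
  exact sum_le_card_nsmul _ _ _ fun i hi => by
    simpa only [sq_abs] using pow_le_pow_left₀ (abs_nonneg _) (h i hi) 2

end restr

lemma transpose_mulVec_dotProduct {m n : ℕ} (A : Matrix (Fin m) (Fin n) ℝ) (w : Fin m → ℝ)
    (x : Fin n → ℝ) : (Aᵀ *ᵥ w) ⬝ᵥ x = w ⬝ᵥ (A *ᵥ x) := by
  rw [mulVec_transpose, dotProduct_mulVec]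

namespace RIP

variable {m n t : ℕ} {A : Matrix (Fin m) (Fin n) ℝ} {δ : ℝ} {J : Finset (Fin n)}

lemma of_support (h : RIP A t δ) (hJ : J.card ≤ t) {x : Fin n → ℝ} (hx : ∀ i ∉ J, x i = 0) :
    (1 - δ) * l2 x ^ 2 ≤ l2 (A *ᵥ x) ^ 2 ∧ l2 (A *ᵥ x) ^ 2 ≤ (1 + δ) * l2 x ^ 2 := by
  simpa only [restr_eq_self hx] using h x J hJ

lemma nonneg (h : RIP A t δ) (hJ : J.card ≤ t) {x : Fin n → ℝ} (hx : ∀ i ∉ J, x i = 0)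
    (hx0 : x ≠ 0) : 0 ≤ δ := by
  have hpos : 0 < l2 x ^ 2 := by positivity [l2_eq_zero.not.2 hx0]
  obtain ⟨hlow, hup⟩ := h.of_support hJ hx
  nlinarith

lemma l2_mulVec_le (h : RIP A t δ) (hδ : 0 ≤ 1 + δ) (hJ : J.card ≤ t) {x : Fin n → ℝ}
    (hx : ∀ i ∉ J, x i = 0) : l2 (A *ᵥ x) ≤ Real.sqrt (1 + δ) * l2 x := by
  refine l2_le_of_sq_le (mul_nonneg (Real.sqrt_nonneg _) (l2_nonneg x)) ?_
  rw [mul_pow, Real.sq_sqrt hδ]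
  exact (h.of_support hJ hx).2

lemma dotProduct_sub_le_half (h : RIP A t δ) (hJ : J.card ≤ t) {x y : Fin n → ℝ}
    (hx : ∀ i ∉ J, x i = 0) (hy : ∀ i ∉ J, y i = 0) :
    x ⬝ᵥ y - (A *ᵥ x) ⬝ᵥ (A *ᵥ y) ≤ δ * (l2 x ^ 2 + l2 y ^ 2) / 2 := by
  have hlow := (h.of_support hJ (x := x + y) fun i hi => by simp [hx i hi, hy i hi]).1
  have hup := (h.of_support hJ (x := x - y) fun i hi => by simp [hx i hi, hy i hi]).2
  rw [mulVec_add, l2_add_sq, l2_add_sq] at hlow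
  rw [mulVec_sub, l2_sub_sq, l2_sub_sq] at hup
  nlinarith

lemma dotProduct_sub_le (h : RIP A t δ) (hJ : J.card ≤ t) {x y : Fin n → ℝ}
    (hx : ∀ i ∉ J, x i = 0) (hy : ∀ i ∉ J, y i = 0) :
    x ⬝ᵥ y - (A *ᵥ x) ⬝ᵥ (A *ᵥ y) ≤ δ * l2 x * l2 y := by
  rcases (mul_nonneg (l2_nonneg x) (l2_nonneg y)).eq_or_lt with h0 | hpos
  · rcases mul_eq_zero.1 h0.symm with hx0 | hy0
    · obtain rfl := l2_eq_zero.1 hx0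
      simp [hx0]
    · obtain rfl := l2_eq_zero.1 hy0
      simp [hy0]
  -- rescale to `‖y‖ • x` and `‖x‖ • y`, which have the same norm
  have := h.dotProduct_sub_le_half hJ (x := l2 y • x) (y := l2 x • y)
    (fun i hi => by simp [hx i hi]) (fun i hi => by simp [hy i hi])
  simp only [mulVec_smul, smul_dotProduct, dotProduct_smul, l2_smul, smul_eq_mul,
    abs_of_nonneg (l2_nonneg _)] at this
  nlinarith

lemma l2_restr_sub_transpose_mulVec_le (h : RIP A t δ) (hJ : J.card ≤ t) {T : Finset (Fin n)}
    (hTJ : T ⊆ J) {x : Fin n → ℝ} (hx : ∀ i ∉ J, x i = 0) :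
    l2 (restr T (x - Aᵀ *ᵥ (A *ᵥ x))) ≤ δ * l2 x := by
  rcases eq_or_ne x 0 with rfl | hx0
  · simp
  refine l2_restr_le_of_dotProduct_le (mul_nonneg (h.nonneg hJ hx hx0) (l2_nonneg x)) ?_
  rw [sub_dotProduct, transpose_mulVec_dotProduct]
  exact h.dotProduct_sub_le hJ hx fun i hi => restr_apply_of_notMem (fun hT => hi (hTJ hT)) _

lemma l2_restr_transpose_mulVec_le (h : RIP A t δ) (hδ : 0 ≤ 1 + δ) {T : Finset (Fin n)}
    (hT : T.card ≤ t) (e : Fin m → ℝ) :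
    l2 (restr T (Aᵀ *ᵥ e)) ≤ Real.sqrt (1 + δ) * l2 e := by
  refine l2_restr_le_of_dotProduct_le (mul_nonneg (Real.sqrt_nonneg _) (l2_nonneg e)) ?_
  rw [transpose_mulVec_dotProduct]
  calc e ⬝ᵥ (A *ᵥ restr T (Aᵀ *ᵥ e)) ≤ l2 e * l2 (A *ᵥ restr T (Aᵀ *ᵥ e)) :=
        dotProduct_le_l2_mul_l2 _ _
    _ ≤ l2 e * (Real.sqrt (1 + δ) * l2 (restr T (Aᵀ *ᵥ e))) :=
        mul_le_mul_of_nonneg_left (h.l2_mulVec_le hδ hT fun i hi => restr_apply_of_notMem hi _)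
          (l2_nonneg e)
    _ = Real.sqrt (1 + δ) * l2 e * l2 (restr T (Aᵀ *ᵥ e)) := by ring

end RIP

section gradientStep

variable {m n t t' : ℕ} {A : Matrix (Fin m) (Fin n) ℝ}

lemma gradient_step_sub_eq (x xbar : Fin n → ℝ) (ε : Fin m → ℝ) (v : ℝ) :
    x - v • Aᵀ *ᵥ (A *ᵥ x - (A *ᵥ xbar + ε)) - xbar
      = (1 - v) • (x - xbar) + v • (x - xbar - Aᵀ *ᵥ (A *ᵥ (x - xbar))) + v • Aᵀ *ᵥ ε := by
  simp only [mulVec_sub, mulVec_add]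
  module

lemma l2_restr_gradient_step_sub_le {δ δ' v : ℝ} (h : RIP A t δ) (h' : RIP A t' δ')
    (hδ' : 0 ≤ 1 + δ') (hv : 0 ≤ v) {J T : Finset (Fin n)} (hJ : J.card ≤ t) (hTJ : T ⊆ J)
    (hT : T.card ≤ t') {x xbar : Fin n → ℝ} (hx : ∀ i ∉ J, (x - xbar) i = 0) (ε : Fin m → ℝ) :
    l2 (restr T (x - v • Aᵀ *ᵥ (A *ᵥ x - (A *ᵥ xbar + ε)) - xbar))
      ≤ (|1 - v| + v * δ) * l2 (x - xbar) + v * (Real.sqrt (1 + δ') * l2 ε) := by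
  set d := x - xbar
  rw [gradient_step_sub_eq, restr_add, restr_add, restr_smul, restr_smul, restr_smul]
  calc _ ≤ l2 ((1 - v) • restr T d) + l2 (v • restr T (d - Aᵀ *ᵥ (A *ᵥ d)))
          + l2 (v • restr T (Aᵀ *ᵥ ε)) :=
        (l2_add_le _ _).trans (add_le_add_left (l2_add_le _ _) _)
    _ ≤ |1 - v| * l2 d + v * (δ * l2 d) + v * (Real.sqrt (1 + δ') * l2 ε) := by
        rw [l2_smul, l2_smul, l2_smul, abs_of_nonneg hv]
        gcongr
        · exact l2_restr_le T d
        · exact h.l2_restr_sub_transpose_mulVec_le hJ hTJ hx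
        · exact h'.l2_restr_transpose_mulVec_le hδ' hT ε
    _ = (|1 - v| + v * δ) * l2 d + v * (Real.sqrt (1 + δ') * l2 ε) := by ring

end gradientStep

section thresholding

variable {k : ℕ}

lemma Real.abs_mul_sign (r : ℝ) : |r| * Real.sign r = r := by
  rcases lt_trichotomy r 0 with h | rfl | h
  · simp [Real.sign_of_neg h, abs_of_neg h]
  · simp
  · simp [Real.sign_of_pos h, abs_of_pos h]

lemma Real.abs_sign_of_ne_zero {r : ℝ} (hr : r ≠ 0) : |Real.sign r| = 1 := by
  rcases Real.sign_apply_eq_of_ne_zero r hr with h | h <;> simp [h]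

lemma softT_apply_of_abs_le {μ : ℝ} {u : Fin k → ℝ} {i : Fin k} (h : |u i| ≤ μ) :
    softT μ u i = 0 := by
  simp [softT, max_eq_right (sub_nonpos.2 h)]

lemma softT_apply_of_lt_abs {μ : ℝ} {u : Fin k → ℝ} {i : Fin k} (h : μ < |u i|) :
    softT μ u i = (|u i| - μ) * Real.sign (u i) := by
  simp [softT, max_eq_left (sub_nonneg.2 h.le)]

lemma abs_thrT_sub_le {μ : ℝ} (hμ : 0 ≤ μ) (u : Fin k → ℝ) (i : Fin k) :
    |thrT μ u i - u i| ≤ μ := by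
  set L := l2 (softT μ u)
  have hthr : thrT μ u i = (1 + μ / L) * softT μ u i := rfl
  rcases le_or_gt |u i| μ with hle | hlt
  · rwa [hthr, softT_apply_of_abs_le hle, mul_zero, zero_sub, abs_neg]
  have hσ := Real.abs_sign_of_ne_zero (abs_pos.1 (hμ.trans_lt hlt))
  have hyL : |u i| - μ ≤ L := by
    simpa [softT_apply_of_lt_abs hlt, abs_mul, hσ, abs_of_pos (sub_pos.2 hlt)]
      using abs_le_l2 (softT μ u) i
  have hL : 0 < L := (sub_pos.2 hlt).trans_le hyL
  have hdiff : thrT μ u i - u i = μ * ((|u i| - μ) / L - 1) * Real.sign (u i) := by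
    rw [hthr, softT_apply_of_lt_abs hlt]
    linear_combination Real.abs_mul_sign (u i)
  -- the enlargement pushes the entry back towards `u i`, by a fraction `(|u i| - μ) / L ≤ 1` of `μ`
  have h0 : 0 ≤ (|u i| - μ) / L := div_nonneg (sub_pos.2 hlt).le hL.le
  have h1 : (|u i| - μ) / L ≤ 1 := (div_le_one hL).2 hyL
  rw [hdiff, abs_mul, abs_mul, hσ, abs_of_nonneg hμ, mul_one]
  exact mul_le_of_le_one_right hμ (abs_le.2 ⟨by linarith, by linarith⟩)

end thresholding

section hardThresholding

lemma sum_le_sum_of_card_le_of_forall_le {ι : Type*} {D E : Finset ι} {f : ι → ℝ}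
    (hcard : D.card ≤ E.card) (hf : ∀ i ∈ E, 0 ≤ f i) (hle : ∀ j ∈ D, ∀ i ∈ E, f j ≤ f i) :
    ∑ j ∈ D, f j ≤ ∑ i ∈ E, f i := by
  rcases E.eq_empty_or_nonempty with rfl | hE
  · simp [card_eq_zero.1 (Nat.le_zero.1 hcard)]
  obtain ⟨i₀, hi₀, hmin⟩ := E.exists_min_image f hE
  calc ∑ j ∈ D, f j ≤ D.card • f i₀ := sum_le_card_nsmul D f _ fun j hj => hle j hj i₀ hi₀
    _ ≤ E.card • f i₀ := nsmul_le_nsmul_left (hf i₀ hi₀) hcard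
    _ ≤ ∑ i ∈ E, f i := card_nsmul_le_sum E f _ hmin

open Real in
lemma add_add_sq_le_goldenRatio_sq {A a c : ℝ} (ha : a ^ 2 ≤ A) :
    A + (a + c) ^ 2 ≤ goldenRatio ^ 2 * (A + c ^ 2) := by
  have key : goldenRatio * (goldenRatio ^ 2 * (A + c ^ 2) - (A + (a + c) ^ 2))
      = goldenRatio ^ 2 * (A - a ^ 2) + (a - goldenRatio * c) ^ 2 := by
    linear_combination (goldenRatio * (A + c ^ 2) + a ^ 2) * goldenRatio_sq
  nlinarith [goldenRatio_pos, sq_nonneg (a - goldenRatio * c),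
    mul_nonneg (sq_nonneg goldenRatio) (sub_nonneg.2 ha)]

variable {k : ℕ}

lemma l2_restr_sub_le_goldenRatio_mul {z x : Fin k → ℝ} {S K : Finset (Fin k)}
    (hx : ∀ i ∉ S, x i = 0) (hSK : S.card ≤ K.card) (hK : ∀ i ∈ K, ∀ j ∈ Kᶜ, |z j| ≤ |z i|) :
    l2 (restr K z - x) ≤ Real.goldenRatio * l2 (restr (K ∪ S) (z - x)) := by
  set w := z - x
  have hsplit : l2 (restr K z - x) ^ 2 = l2 (restr K w) ^ 2 + l2 (restr (S \ K) x) ^ 2 :=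
    l2_sq_eq_add_of_forall_sq_eq fun i => by
      by_cases hiK : i ∈ K <;> by_cases hiS : i ∈ S <;> simp [restr, w, hiK, hiS, hx]
  have hsplit' : l2 (restr (K ∪ S) w) ^ 2 = l2 (restr K w) ^ 2 + l2 (restr (S \ K) w) ^ 2 :=
    l2_sq_eq_add_of_forall_sq_eq fun i => by
      by_cases hiK : i ∈ K <;> by_cases hiS : i ∈ S <;> simp [restr, hiK, hiS]
  have htri : l2 (restr (S \ K) x) ≤ l2 (restr (S \ K) z) + l2 (restr (S \ K) w) := by
    simpa only [w, restr_sub, sub_sub_cancel] using l2_sub_le (restr (S \ K) z) (restr (S \ K) w)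
  have hmissed : l2 (restr (S \ K) z) ^ 2 ≤ l2 (restr K w) ^ 2 := by
    rw [l2_restr_sq, l2_restr_sq]
    calc ∑ i ∈ S \ K, z i ^ 2 ≤ ∑ i ∈ K \ S, z i ^ 2 := by
          refine sum_le_sum_of_card_le_of_forall_le (card_sdiff_le_card_sdiff_iff.2 hSK)
            (fun i _ => sq_nonneg _) fun j hj i hi => ?_
          exact sq_le_sq.2 (hK i (mem_sdiff.1 hi).1 j (mem_compl.2 (mem_sdiff.1 hj).2))
      _ = ∑ i ∈ K \ S, w i ^ 2 := sum_congr rfl fun i hi => by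
          simp [w, hx i (mem_sdiff.1 hi).2]
      _ ≤ ∑ i ∈ K, w i ^ 2 := sum_le_sum_of_subset_of_nonneg sdiff_subset
          fun i _ _ => sq_nonneg _
  refine l2_le_of_sq_le (mul_nonneg Real.goldenRatio_pos.le (l2_nonneg _)) ?_
  calc l2 (restr K z - x) ^ 2
      ≤ l2 (restr K w) ^ 2 + (l2 (restr (S \ K) z) + l2 (restr (S \ K) w)) ^ 2 := by
        rw [hsplit]
        gcongr
        exact l2_nonneg _
    _ ≤ Real.goldenRatio ^ 2 * (l2 (restr K w) ^ 2 + l2 (restr (S \ K) w) ^ 2) :=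
        add_add_sq_le_goldenRatio_sq hmissed
    _ = (Real.goldenRatio * l2 (restr (K ∪ S) w)) ^ 2 := by rw [mul_pow, hsplit']

end hardThresholding

theorem stmt18_general {m n s : ℕ} (A : Matrix (Fin m) (Fin n) ℝ) (δ3 δ2 : ℝ)
    (hRIP3 : RIP A (3 * s) δ3) (hRIP2 : RIP A (2 * s) δ2) (hδ2 : 0 ≤ δ2)
    (hδ : δ3 < (Real.sqrt 5 - 1) / 2)
    (v lam : ℝ) (hlam : 0 ≤ lam)
    (hv1 : (3 - Real.sqrt 5) / (2 * (1 - δ3)) < v)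
    (xbar xk : Fin n → ℝ) (ε : Fin m → ℝ) (b : Fin m → ℝ)
    (hb : b = A.mulVec xbar + ε)
    (Sb : Finset (Fin n)) (hSb : ∀ i ∉ Sb, xbar i = 0) (hSbcard : Sb.card ≤ s)
    (Sk : Finset (Fin n)) (hSk : ∀ i ∉ Sk, xk i = 0) (hSkcard : Sk.card ≤ s)
    (z : Fin n → ℝ)
    (hz : z = thrT (v * lam) (xk - v • Aᵀ.mulVec (A.mulVec xk - b)))
    (K : Finset (Fin n)) (hK : K.card = min s n)
    (hKmax : ∀ i ∈ K, ∀ j ∈ Kᶜ, |z j| ≤ |z i|)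
    (xk1 : Fin n → ℝ) (hxk1 : xk1 = restr K z) :
    l2 (xk1 - xbar) ≤ (Real.sqrt 5 + 1) / 2 * (|1 - v| + v * δ3) * l2 (xk - xbar) +
      (Real.sqrt 5 + 1) / 2 * v *
        (Real.sqrt (1 + δ2) * l2 ε + Real.sqrt (2 * s) * lam) := by
  have hsqrt5 : Real.sqrt 5 < 3 := by
    rw [Real.sqrt_lt' three_pos]; norm_num
  have hv : 0 ≤ v := (div_pos (by linarith) (by linarith)).le.trans hv1.le
  have hμ : 0 ≤ v * lam := mul_nonneg hv hlam
  have hSbK : Sb.card ≤ K.card :=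
    hK ▸ le_min hSbcard ((card_le_univ Sb).trans_eq (Fintype.card_fin n))
  have hT : (K ∪ Sb).card ≤ 2 * s := (card_union_le _ _).trans (by omega)
  have hJ : (K ∪ Sb ∪ Sk).card ≤ 3 * s := (card_union_le _ _).trans (by omega)
  have hd : ∀ i ∉ K ∪ Sb ∪ Sk, (xk - xbar) i = 0 := fun i hi => by
    simp only [mem_union, not_or] at hi
    simp [hSk i hi.2, hSb i hi.1.2]
  set u := xk - v • Aᵀ *ᵥ (A *ᵥ xk - b)
  have hzu : l2 (restr (K ∪ Sb) (z - u)) ≤ Real.sqrt (2 * s) * (v * lam) :=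
    (l2_restr_le_of_abs_le hμ fun i _ => hz ▸ abs_thrT_sub_le hμ u i).trans
      (by gcongr; exact_mod_cast hT)
  have hux := l2_restr_gradient_step_sub_le hRIP3 hRIP2 (by linarith) hv hJ subset_union_left hT
    hd ε
  rw [← hb] at hux
  subst hxk1
  calc l2 (restr K z - xbar) ≤ Real.goldenRatio * l2 (restr (K ∪ Sb) (z - xbar)) :=
        l2_restr_sub_le_goldenRatio_mul hSb hSbK hKmax
    _ ≤ Real.goldenRatio * (l2 (restr (K ∪ Sb) (z - u)) + l2 (restr (K ∪ Sb) (u - xbar))) := by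
        rw [← sub_add_sub_cancel z u xbar, restr_add]
        exact mul_le_mul_of_nonneg_left (l2_add_le _ _) Real.goldenRatio_pos.le
    _ ≤ Real.goldenRatio * (Real.sqrt (2 * s) * (v * lam)
          + ((|1 - v| + v * δ3) * l2 (xk - xbar) + v * (Real.sqrt (1 + δ2) * l2 ε))) := by
        gcongr
    _ = _ := by ring

theorem stmt18 {m n s : ℕ} (A : Matrix (Fin m) (Fin n) ℝ) (δ3 δ2 : ℝ)
    (hRIP3 : RIP A (3 * s) δ3) (hRIP2 : RIP A (2 * s) δ2) (hδ2 : 0 ≤ δ2)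
    (hδ : δ3 < (Real.sqrt 5 - 1) / 2)
    (v lam : ℝ) (hlam : 0 ≤ lam)
    (hv1 : (3 - Real.sqrt 5) / (2 * (1 - δ3)) < v)
    (hv2 : v < (Real.sqrt 5 + 1) / (2 * (1 - δ3)))
    (xbar xk : Fin n → ℝ) (ε : Fin m → ℝ) (b : Fin m → ℝ)
    (hb : b = A.mulVec xbar + ε)
    (Sb : Finset (Fin n)) (hSb : ∀ i ∉ Sb, xbar i = 0) (hSbcard : Sb.card ≤ s)
    (Sk : Finset (Fin n)) (hSk : ∀ i ∉ Sk, xk i = 0) (hSkcard : Sk.card ≤ s)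
    (z : Fin n → ℝ)
    (hz : z = thrT (v * lam) (xk - v • Aᵀ.mulVec (A.mulVec xk - b)))
    (K : Finset (Fin n)) (hK : K.card = min s n)
    (hKmax : ∀ i ∈ K, ∀ j ∈ Kᶜ, |z j| ≤ |z i|)
    (xk1 : Fin n → ℝ) (hxk1 : xk1 = restr K z) :
    l2 (xk1 - xbar) ≤ (Real.sqrt 5 + 1) / 2 * (|1 - v| + v * δ3) * l2 (xk - xbar) +
      (Real.sqrt 5 + 1) / 2 * v *
        (Real.sqrt (1 + δ2) * l2 ε + Real.sqrt (2 * s) * lam) :=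
  stmt18_general A δ3 δ2 hRIP3 hRIP2 hδ2 hδ v lam hlam hv1 xbar xk ε b hb Sb hSb hSbcard Sk hSk
    hSkcard z hz K hK hKmax xk1 hxk1
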